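/- Let d ≥ 1, θ ∈ [0, π/2) and M > 0. Let C = (c_{kl}) : ℝ^d → ℂ^{d×d} be measurable with ⟨C(x)ξ, ξ⟩ ∈ Σ_θ (so in particular Re ⟨C(x)ξ, ξ⟩ ≥ 0) and operator norm ‖C(x)‖ ≤ M for all x ∈ ℝ^d and ξ ∈ ℂ^d. Let η : ℝ^d → ℝ be bounded and differentiable with bounded gradient, and let u : ℝ^d → ℂ be continuously differentiable with u and all partial derivatives ∂_k u square-integrable. Then Re 𝔞_C(η u, η u) ≤ 2 · (sup_x |η(x)|)² · Re 𝔞_C(u, u) + 2 M · (sup_x |∇η(x)|)² · ‖u‖_{L²(ℝ^d)}². -/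

import Mathlib

/-!
Write `q(ξ) = ⟨C(x)ξ, ξ⟩`; on the sector `Re q ≥ 0`, so the parallelogram identity
`q(a + b) + q(a - b) = 2 q(a) + 2 q(b)` gives `Re q(a + b) ≤ 2 Re q(a) + 2 Re q(b)`. Applied to
`∇(ηu) = η ∇u + u ∇η`, the first term is `η² Re q(∇u)` and the second is at most
`‖C(x)‖ |u|² |∇η|²`. Integrating this pointwise bound gives the claim; every integrand is integrable
because `C` is bounded and `u`, `∂ₖu` lie in `L²`.
-/

open MeasureTheory Complex
open scoped Real

noncomputable section

/-- The closed sector `Σ_θ = { r e^{iα} : r ≥ 0, α ∈ [−θ, θ] }` in `ℂ`. -/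
def sector9 (θ : ℝ) : Set ℂ :=
  {z : ℂ | ∃ r : ℝ, 0 ≤ r ∧ ∃ α : ℝ, |α| ≤ θ ∧ z = (r : ℂ) * Complex.exp (α * Complex.I)}

/-- The quadratic form `⟨C(x)ξ, ξ⟩ = Σ_{k,l} c_{kl}(x) ξ_k conj(ξ_l)`. -/
def quadForm9 {d : ℕ} (C : EuclideanSpace ℝ (Fin d) → Matrix (Fin d) (Fin d) ℂ)
    (x : EuclideanSpace ℝ (Fin d)) (ξ : Fin d → ℂ) : ℂ :=
  ∑ k, ∑ l, C x k l * ξ k * (starRingEnd ℂ) (ξ l)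

/-- The `k`-th partial derivative of a function on `ℝ^d`. -/
def pd9 {d : ℕ} (k : Fin d) (u : EuclideanSpace ℝ (Fin d) → ℂ)
    (x : EuclideanSpace ℝ (Fin d)) : ℂ :=
  fderiv ℝ u x (EuclideanSpace.single k (1 : ℝ))

/-- The sesquilinear form `𝔞_C(u,v) = Σ_{k,l} ∫ c_{kl} (∂_k u) conj(∂_l v)`. -/
def formA9 {d : ℕ} (C : EuclideanSpace ℝ (Fin d) → Matrix (Fin d) (Fin d) ℂ)
    (u v : EuclideanSpace ℝ (Fin d) → ℂ) : ℂ :=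
  ∑ k, ∑ l, ∫ x, C x k l * pd9 k u x * (starRingEnd ℂ) (pd9 l v x)

open InnerProductSpace

theorem re_nonneg_of_mem_sector9 {θ : ℝ} (hθ : θ ≤ π / 2) {z : ℂ} (hz : z ∈ sector9 θ) :
    0 ≤ z.re := by
  obtain ⟨r, hr, α, hα, rfl⟩ := hz
  rw [re_ofReal_mul, exp_ofReal_mul_I_re]
  exact mul_nonneg hr (Real.cos_nonneg_of_mem_Icc (abs_le.mp (hα.trans hθ)))

theorem sum_sq_apply_single_eq_norm_sq {ι : Type*} [Fintype ι] [DecidableEq ι]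
    (f : EuclideanSpace ℝ ι →L[ℝ] ℝ) :
    ∑ k, f (EuclideanSpace.single k 1) ^ 2 = ‖f‖ ^ 2 := by
  set g := (toDual ℝ (EuclideanSpace ℝ ι)).symm f
  have hg : ∀ k, f (EuclideanSpace.single k 1) = g k := fun k => by
    rw [← toDual_symm_apply, EuclideanSpace.inner_single_right]; simp [g]
  simp only [hg, ← LinearIsometryEquiv.norm_map (toDual ℝ _).symm f, EuclideanSpace.real_norm_sq_eq]
  rfl

theorem norm_apply_le_norm_toEuclideanCLM {ι : Type*} [Fintype ι] [DecidableEq ι]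
    (A : Matrix ι ι ℂ) (k l : ι) : ‖A k l‖ ≤ ‖Matrix.toEuclideanCLM (𝕜 := ℂ) A‖ := by
  have hA : A k l = Matrix.toEuclideanCLM (𝕜 := ℂ) A (EuclideanSpace.single l 1) k := by
    simp [EuclideanSpace.single, Matrix.mulVec_single]
  calc ‖A k l‖ ≤ ‖Matrix.toEuclideanCLM (𝕜 := ℂ) A (EuclideanSpace.single l 1)‖ :=
        hA ▸ PiLp.norm_apply_le _ k
    _ ≤ ‖Matrix.toEuclideanCLM (𝕜 := ℂ) A‖ := by
        simpa using (Matrix.toEuclideanCLM (𝕜 := ℂ) A).le_opNorm (EuclideanSpace.single l 1)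

section QuadForm

variable {d : ℕ} (C : EuclideanSpace ℝ (Fin d) → Matrix (Fin d) (Fin d) ℂ)
  (x : EuclideanSpace ℝ (Fin d))

theorem quadForm9_add_add_quadForm9_sub (ξ ζ : Fin d → ℂ) :
    quadForm9 C x (ξ + ζ) + quadForm9 C x (ξ - ζ) = 2 * quadForm9 C x ξ + 2 * quadForm9 C x ζ := by
  simp only [quadForm9, Finset.mul_sum, ← Finset.sum_add_distrib, Pi.add_apply, Pi.sub_apply,
    map_add, map_sub]
  exact Finset.sum_congr rfl fun k _ => Finset.sum_congr rfl fun l _ => by ring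

theorem quadForm9_ofReal_smul (r : ℝ) (ξ : Fin d → ℂ) :
    quadForm9 C x ((r : ℂ) • ξ) = (r ^ 2 : ℝ) * quadForm9 C x ξ := by
  simp only [quadForm9, Finset.mul_sum, Pi.smul_apply, smul_eq_mul, map_mul, conj_ofReal]
  push_cast
  exact Finset.sum_congr rfl fun k _ => Finset.sum_congr rfl fun l _ => by ring

theorem quadForm9_eq_inner (ξ : Fin d → ℂ) :
    quadForm9 C x ξ = inner ℂ (WithLp.toLp 2 (star ξ))
      (Matrix.toEuclideanCLM (𝕜 := ℂ) (C x) (WithLp.toLp 2 (star ξ))) := by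
  simp only [quadForm9, Matrix.toEuclideanCLM_toLp, PiLp.inner_apply, Pi.star_apply,
    RCLike.star_def, Matrix.mulVec, dotProduct, RCLike.inner_apply, RingHomCompTriple.comp_apply,
    RingHom.id_apply, Finset.sum_mul]
  exact Finset.sum_congr rfl fun k _ => Finset.sum_congr rfl fun l _ => by ring

theorem norm_quadForm9_le (ξ : Fin d → ℂ) :
    ‖quadForm9 C x ξ‖ ≤ ‖Matrix.toEuclideanCLM (𝕜 := ℂ) (C x)‖ * ∑ k, ‖ξ k‖ ^ 2 := by
  have hξ : ‖WithLp.toLp 2 (star ξ)‖ ^ 2 = ∑ k, ‖ξ k‖ ^ 2 := by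
    simp [EuclideanSpace.norm_sq_eq]
  rw [quadForm9_eq_inner, ← hξ]
  set ζ : EuclideanSpace ℂ (Fin d) := WithLp.toLp 2 (star ξ)
  calc _ ≤ ‖ζ‖ * ‖Matrix.toEuclideanCLM (𝕜 := ℂ) (C x) ζ‖ := norm_inner_le_norm _ _
    _ ≤ ‖ζ‖ * (‖Matrix.toEuclideanCLM (𝕜 := ℂ) (C x)‖ * ‖ζ‖) := by
        gcongr; exact ContinuousLinearMap.le_opNorm _ _
    _ = _ := by ring

theorem re_quadForm9_ofReal_smul_add_le (hre : ∀ ξ, 0 ≤ (quadForm9 C x ξ).re) (r : ℝ)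
    (ξ ζ : Fin d → ℂ) :
    (quadForm9 C x ((r : ℂ) • ξ + ζ)).re ≤
      2 * r ^ 2 * (quadForm9 C x ξ).re
        + 2 * ‖Matrix.toEuclideanCLM (𝕜 := ℂ) (C x)‖ * ∑ k, ‖ζ k‖ ^ 2 := by
  have hpar := quadForm9_add_add_quadForm9_sub C x ((r : ℂ) • ξ) ζ
  rw [quadForm9_ofReal_smul] at hpar
  replace hpar := congrArg re hpar
  simp only [add_re, mul_re, re_ofNat, im_ofNat, ofReal_re, ofReal_im, zero_mul, sub_zero] at hpar
  have hζ := (re_le_norm _).trans (norm_quadForm9_le C x ζ)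
  linarith [hre ((r : ℂ) • ξ - ζ)]

end QuadForm

theorem pd9_ofReal_mul {d : ℕ} {η : EuclideanSpace ℝ (Fin d) → ℝ} {u : EuclideanSpace ℝ (Fin d) → ℂ}
    {x : EuclideanSpace ℝ (Fin d)} (hη : DifferentiableAt ℝ η x) (hu : DifferentiableAt ℝ u x)
    (k : Fin d) :
    pd9 k (fun y => (η y : ℂ) * u y) x
      = (η x : ℂ) * pd9 k u x + u x * (fderiv ℝ η x (EuclideanSpace.single k 1) : ℂ) := by
  have hη' : HasFDerivAt (fun y => (η y : ℂ)) (ofRealCLM.comp (fderiv ℝ η x)) x :=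
    ofRealCLM.hasFDerivAt.comp x hη.hasFDerivAt
  rw [pd9, (hη'.fun_mul hu.hasFDerivAt).fderiv]
  simp [pd9]

theorem integrable_mul_mul_conj {α : Type*} [MeasurableSpace α] {μ : Measure α} {c f g : α → ℂ}
    {M : ℝ} (hc : AEStronglyMeasurable c μ) (hcM : ∀ x, ‖c x‖ ≤ M) (hf : MemLp f 2 μ)
    (hg : MemLp g 2 μ) : Integrable (fun x => c x * f x * starRingEnd ℂ (g x)) μ := by
  have hfg : Integrable (f * star g) μ := hf.integrable_mul hg.star
  simpa only [mul_assoc, Pi.mul_apply, Pi.star_apply, Complex.star_def] using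
    hfg.bdd_mul hc (ae_of_all _ hcM)

section Form

variable {d : ℕ} {C : EuclideanSpace ℝ (Fin d) → Matrix (Fin d) (Fin d) ℂ}
  {v : EuclideanSpace ℝ (Fin d) → ℂ}

theorem integrable_quadForm9_pd9
    (hv : ∀ k l, Integrable (fun x => C x k l * pd9 k v x * starRingEnd ℂ (pd9 l v x))) :
    Integrable fun x => quadForm9 C x (fun k => pd9 k v x) :=
  integrable_finsetSum _ fun k _ => integrable_finsetSum _ fun l _ => hv k l

theorem formA9_self_eq_integral
    (hv : ∀ k l, Integrable (fun x => C x k l * pd9 k v x * starRingEnd ℂ (pd9 l v x))) :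
    formA9 C v v = ∫ x, quadForm9 C x (fun k => pd9 k v x) := by
  simp only [quadForm9]
  rw [integral_finsetSum _ fun k _ => integrable_finsetSum _ fun l _ => hv k l]
  exact Finset.sum_congr rfl fun k _ => (integral_finsetSum _ fun l _ => hv k l).symm

end Form

theorem memLp_pd9_ofReal_mul {d : ℕ} {μ : Measure (EuclideanSpace ℝ (Fin d))}
    {η : EuclideanSpace ℝ (Fin d) → ℝ} {u : EuclideanSpace ℝ (Fin d) → ℂ} {Bη Bg : ℝ}
    (hη : Differentiable ℝ η) (hηb : ∀ x, |η x| ≤ Bη) (hηg : ∀ x, ‖fderiv ℝ η x‖ ≤ Bg)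
    (hu : Differentiable ℝ u) (hu2 : MemLp u 2 μ) {k : Fin d} (hdu2 : MemLp (pd9 k u) 2 μ) :
    MemLp (pd9 k fun x => (η x : ℂ) * u x) 2 μ := by
  have hdη : ∀ x, ‖fderiv ℝ η x (EuclideanSpace.single k 1)‖ ≤ Bg := fun x => by
    simpa using ((fderiv ℝ η x).le_opNorm (EuclideanSpace.single k 1)).trans
      (by simpa using hηg x)
  rw [funext fun x => pd9_ofReal_mul (hη x) (hu x) k]
  refine MemLp.add ?_ ?_
  · refine hdu2.of_le_mul (c := Bη) ?_ (ae_of_all _ fun x => ?_)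
    · exact (continuous_ofReal.comp hη.continuous).aestronglyMeasurable.mul hdu2.1
    · simpa [norm_mul] using mul_le_mul_of_nonneg_right (hηb x) (norm_nonneg (pd9 k u x))
  · refine hu2.of_le_mul (c := Bg) ?_ (ae_of_all _ fun x => ?_)
    · exact hu2.1.mul (measurable_ofReal.comp
        (measurable_fderiv_apply_const ℝ η _)).aestronglyMeasurable
    · simpa [norm_mul, mul_comm] using mul_le_mul_of_nonneg_right (hdη x) (norm_nonneg (u x))

theorem re_quadForm9_pd9_ofReal_mul_le {d : ℕ}
    {C : EuclideanSpace ℝ (Fin d) → Matrix (Fin d) (Fin d) ℂ} {x : EuclideanSpace ℝ (Fin d)}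
    (hre : ∀ ξ, 0 ≤ (quadForm9 C x ξ).re) {M : ℝ}
    (hC : ‖Matrix.toEuclideanCLM (𝕜 := ℂ) (C x)‖ ≤ M)
    {η : EuclideanSpace ℝ (Fin d) → ℝ} {u : EuclideanSpace ℝ (Fin d) → ℂ} {Bη Bg : ℝ}
    (hη : DifferentiableAt ℝ η x) (hηx : |η x| ≤ Bη) (hηg : ‖fderiv ℝ η x‖ ≤ Bg)
    (hu : DifferentiableAt ℝ u x) :
    (quadForm9 C x fun k => pd9 k (fun y => (η y : ℂ) * u y) x).re ≤
      2 * Bη ^ 2 * (quadForm9 C x fun k => pd9 k u x).re + 2 * M * Bg ^ 2 * ‖u x‖ ^ 2 := by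
  have hgrad : (fun k => pd9 k (fun y => (η y : ℂ) * u y) x) = (η x : ℂ) • (fun k => pd9 k u x)
      + fun k => u x * (fderiv ℝ η x (EuclideanSpace.single k 1) : ℂ) :=
    funext fun k => pd9_ofReal_mul hη hu k
  have hζ : ∑ k, ‖u x * (fderiv ℝ η x (EuclideanSpace.single k 1) : ℂ)‖ ^ 2
      = ‖fderiv ℝ η x‖ ^ 2 * ‖u x‖ ^ 2 := by
    simp only [norm_mul, mul_pow, norm_real, Real.norm_eq_abs, sq_abs, ← Finset.mul_sum,
      sum_sq_apply_single_eq_norm_sq]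
    ring
  have hM : 0 ≤ M := (norm_nonneg _).trans hC
  rw [hgrad]
  refine (re_quadForm9_ofReal_smul_add_le C x hre _ _ _).trans ?_
  have hη2 : η x ^ 2 ≤ Bη ^ 2 := sq_le_sq' (abs_le.mp hηx).1 (abs_le.mp hηx).2
  rw [hζ, ← mul_assoc]
  gcongr 2 * ?_ * _ + 2 * ?_ * ?_ ^ 2 * _
  exact hre _

theorem re_formA9_self_le_of_forall_le {d : ℕ}
    {C : EuclideanSpace ℝ (Fin d) → Matrix (Fin d) (Fin d) ℂ} {v w : EuclideanSpace ℝ (Fin d) → ℂ}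
    (hv : ∀ k l, Integrable (fun x => C x k l * pd9 k v x * starRingEnd ℂ (pd9 l v x)))
    (hw : ∀ k l, Integrable (fun x => C x k l * pd9 k w x * starRingEnd ℂ (pd9 l w x)))
    (a : ℝ) {g : EuclideanSpace ℝ (Fin d) → ℝ} (hg : Integrable g)
    (h : ∀ x, (quadForm9 C x fun k => pd9 k w x).re ≤
      a * (quadForm9 C x fun k => pd9 k v x).re + g x) :
    (formA9 C w w).re ≤ a * (formA9 C v v).re + ∫ x, g x := by
  have re_integral : ∀ f : EuclideanSpace ℝ (Fin d) → ℂ, Integrable f →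
      (∫ x, f x).re = ∫ x, (f x).re := fun f hf => (integral_re hf).symm
  have hqv : Integrable fun x => (quadForm9 C x fun k => pd9 k v x).re :=
    (integrable_quadForm9_pd9 hv).re
  rw [formA9_self_eq_integral hv, formA9_self_eq_integral hw,
    re_integral _ (integrable_quadForm9_pd9 hv), re_integral _ (integrable_quadForm9_pd9 hw),
    ← integral_const_mul, ← integral_add (hqv.const_mul a) hg]
  exact integral_mono (integrable_quadForm9_pd9 hw).re ((hqv.const_mul a).add hg) h

theorem stmt9_general (d : ℕ) (θ M : ℝ)
    (hθ : θ ∈ Set.Ico (0 : ℝ) (Real.pi / 2))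
    (C : EuclideanSpace ℝ (Fin d) → Matrix (Fin d) (Fin d) ℂ)
    (hmeas : ∀ k l : Fin d, Measurable fun x => C x k l)
    (hsec : ∀ x ξ, quadForm9 C x ξ ∈ sector9 θ)
    (hnorm : ∀ x, ‖Matrix.toEuclideanCLM (𝕜 := ℂ) (C x)‖ ≤ M)
    (η : EuclideanSpace ℝ (Fin d) → ℝ) (Bη Bg : ℝ)
    (hηb : ∀ x, |η x| ≤ Bη) (hηd : Differentiable ℝ η)
    (hηg : ∀ x, ‖fderiv ℝ η x‖ ≤ Bg)
    (u : EuclideanSpace ℝ (Fin d) → ℂ) (hu : ContDiff ℝ 1 u)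
    (hu2 : MemLp u 2 (volume : Measure (EuclideanSpace ℝ (Fin d))))
    (hdu2 : ∀ k : Fin d, MemLp (pd9 k u) 2 (volume : Measure (EuclideanSpace ℝ (Fin d)))) :
    (formA9 C (fun x => (η x : ℂ) * u x) (fun x => (η x : ℂ) * u x)).re ≤
      2 * Bη ^ 2 * (formA9 C u u).re + 2 * M * Bg ^ 2 * ∫ x, ‖u x‖ ^ 2 := by
  have hud : Differentiable ℝ u := hu.differentiable one_ne_zero
  have hre : ∀ x ξ, 0 ≤ (quadForm9 C x ξ).re := fun x ξ =>
    re_nonneg_of_mem_sector9 hθ.2.le (hsec x ξ)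
  have hint : ∀ v : EuclideanSpace ℝ (Fin d) → ℂ, (∀ k, MemLp (pd9 k v) 2 volume) →
      ∀ k l, Integrable (fun x => C x k l * pd9 k v x * starRingEnd ℂ (pd9 l v x)) :=
    fun v hv k l => integrable_mul_mul_conj (hmeas k l).aestronglyMeasurable
      (fun x => (norm_apply_le_norm_toEuclideanCLM (C x) k l).trans (hnorm x)) (hv k) (hv l)
  have hw2 : ∀ k, MemLp (pd9 k fun x => (η x : ℂ) * u x) 2 volume := fun k =>
    memLp_pd9_ofReal_mul hηd hηb hηg hud hu2 (hdu2 k)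
  rw [← integral_const_mul]
  exact re_formA9_self_le_of_forall_le (hint u hdu2) (hint _ hw2) _
    ((hu2.integrable_norm_pow two_ne_zero).const_mul _) fun x =>
      re_quadForm9_pd9_ofReal_mul_le (hre x) (hnorm x) (hηd x) (hηb x) (hηg x) (hud x)

/-- `Re 𝔞_C(ηu, ηu) ≤ 2 (sup|η|)² Re 𝔞_C(u,u) + 2 M (sup|∇η|)² ‖u‖₂²`. -/
theorem stmt9 (d : ℕ) (hd : 1 ≤ d) (θ M : ℝ)
    (hθ : θ ∈ Set.Ico (0 : ℝ) (Real.pi / 2)) (hM : 0 < M)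
    (C : EuclideanSpace ℝ (Fin d) → Matrix (Fin d) (Fin d) ℂ)
    (hmeas : ∀ k l : Fin d, Measurable fun x => C x k l)
    (hsec : ∀ x ξ, quadForm9 C x ξ ∈ sector9 θ)
    (hnorm : ∀ x, ‖Matrix.toEuclideanCLM (𝕜 := ℂ) (C x)‖ ≤ M)
    (η : EuclideanSpace ℝ (Fin d) → ℝ) (Bη Bg : ℝ)
    (hηb : ∀ x, |η x| ≤ Bη) (hηd : Differentiable ℝ η)
    (hηg : ∀ x, ‖fderiv ℝ η x‖ ≤ Bg)
    (u : EuclideanSpace ℝ (Fin d) → ℂ) (hu : ContDiff ℝ 1 u)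
    (hu2 : MemLp u 2 (volume : Measure (EuclideanSpace ℝ (Fin d))))
    (hdu2 : ∀ k : Fin d, MemLp (pd9 k u) 2 (volume : Measure (EuclideanSpace ℝ (Fin d)))) :
    (formA9 C (fun x => (η x : ℂ) * u x) (fun x => (η x : ℂ) * u x)).re ≤
      2 * Bη ^ 2 * (formA9 C u u).re + 2 * M * Bg ^ 2 * ∫ x, ‖u x‖ ^ 2 :=
  stmt9_general d θ M hθ C hmeas hsec hnorm η Bη Bg hηb hηd hηg u hu hu2 hdu2
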